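/- arXiv:1504.01026 — 7 statements merged into one kernel-verified Lean document; each statement's English description precedes it below -/
import Mathlib

section
/- Let n ≥ 2, let a be a symmetric positive semidefinite n×n real matrix, and suppose there is ε > 0 such that ξᵀ a ξ ≥ ε‖ξ‖² for every ξ ∈ ℝⁿ. Then for every long-only portfolio vector π (i.e. π ∈ ℝⁿ with πᵢ ≥ 0 for all i and Σᵢ πᵢ = 1), the excess growth rate γ*_π(a) := (1/2)(Σᵢ πᵢ aᵢᵢ − Σᵢ Σⱼ πᵢ aᵢⱼ πⱼ) satisfies γ*_π(a) ≥ (ε/2)(1 − maxᵢ πᵢ). -/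
open Finset Matrix

/-!
Put `ξ⁽ⁱ⁾ = eᵢ - π`. Since `∑ᵢ πᵢ ξ⁽ⁱ⁾ = 0`, averaging the quadratic form of `a` over the `ξ⁽ⁱ⁾`
with weights `πᵢ` is a variance decomposition: it gives `∑ᵢ πᵢ aᵢᵢ - πᵀ a π`, twice the excess
growth rate. For `a = 1` the same average is `1 - ∑ᵢ πᵢ² ≥ 1 - maxᵢ πᵢ`, and non-degeneracy applied
to each `ξ⁽ⁱ⁾` compares the two averages.
-/

section

variable {ι R : Type*} [Fintype ι] [CommRing R]

theorem dotProduct_mulVec_eq_sum_sum (a : Matrix ι ι R) (π : ι → R) :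
    π ⬝ᵥ a *ᵥ π = ∑ i, ∑ j, π i * a i j * π j := by
  simp only [dotProduct, mulVec, mul_sum, mul_assoc]

variable [DecidableEq ι]

theorem single_sub_dotProduct_mulVec_single_sub (a : Matrix ι ι R) (π : ι → R) (i : ι) :
    (Pi.single i 1 - π) ⬝ᵥ a *ᵥ (Pi.single i 1 - π) =
      a i i - (a *ᵥ π) i - (π ᵥ* a) i + π ⬝ᵥ a *ᵥ π := by
  rw [mulVec_sub, dotProduct_sub, sub_dotProduct, sub_dotProduct, single_dotProduct,
    single_dotProduct, dotProduct_mulVec π a, dotProduct_single, mulVec_single_one]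
  simp only [col_apply, one_mul, mul_one]
  ring

theorem sum_mul_single_sub_dotProduct_mulVec_single_sub (a : Matrix ι ι R) {π : ι → R}
    (hπ : ∑ i, π i = 1) :
    ∑ i, π i * ((Pi.single i 1 - π) ⬝ᵥ a *ᵥ (Pi.single i 1 - π)) =
      ∑ i, π i * a i i - π ⬝ᵥ a *ᵥ π := by
  have hcol : ∑ i, π i * (π ᵥ* a) i = π ⬝ᵥ a *ᵥ π := by
    rw [dotProduct_mulVec, dotProduct_comm]; rfl
  have hconst : ∑ i, π i * (π ⬝ᵥ a *ᵥ π) = π ⬝ᵥ a *ᵥ π := by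
    rw [← sum_mul, hπ, one_mul]
  simp only [single_sub_dotProduct_mulVec_single_sub, mul_add, mul_sub, sum_add_distrib,
    sum_sub_distrib, hcol, hconst]
  change _ - π ⬝ᵥ a *ᵥ π - _ + _ = _
  ring

theorem sum_mul_sum_sq_single_sub {π : ι → R} (hπ : ∑ i, π i = 1) :
    ∑ i, π i * ∑ j, (Pi.single i 1 - π : ι → R) j ^ 2 = 1 - ∑ i, π i ^ 2 := by
  have h := sum_mul_single_sub_dotProduct_mulVec_single_sub (1 : Matrix ι ι R) hπ
  simp only [one_mulVec, one_apply_eq, mul_one, hπ] at h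
  simpa only [dotProduct, sq] using h

end

section

variable {ι R : Type*} [Fintype ι] [CommRing R] [LinearOrder R] [IsOrderedRing R]

theorem sum_sq_le_sup' {π : ι → R} (hπ0 : ∀ i, 0 ≤ π i) (hπ1 : ∑ i, π i = 1)
    (h : (univ : Finset ι).Nonempty) : ∑ i, π i ^ 2 ≤ univ.sup' h π :=
  calc ∑ i, π i ^ 2 ≤ ∑ i, π i * univ.sup' h π :=
        sum_le_sum fun i hi => by rw [sq]; exact mul_le_mul_of_nonneg_left (le_sup' π hi) (hπ0 i)
    _ = univ.sup' h π := by rw [← sum_mul, hπ1, one_mul]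

variable [DecidableEq ι]

theorem mul_one_sub_sum_sq_le (a : Matrix ι ι R) {ε : R}
    (hnd : ∀ ξ : ι → R, ε * ∑ i, ξ i ^ 2 ≤ ξ ⬝ᵥ a *ᵥ ξ)
    {π : ι → R} (hπ0 : ∀ i, 0 ≤ π i) (hπ1 : ∑ i, π i = 1) :
    ε * (1 - ∑ i, π i ^ 2) ≤ ∑ i, π i * a i i - π ⬝ᵥ a *ᵥ π :=
  calc ε * (1 - ∑ i, π i ^ 2)
      = ∑ i, π i * (ε * ∑ j, (Pi.single i 1 - π : ι → R) j ^ 2) := by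
        simp only [mul_left_comm _ ε, ← mul_sum, sum_mul_sum_sq_single_sub hπ1]
    _ ≤ ∑ i, π i * ((Pi.single i 1 - π) ⬝ᵥ a *ᵥ (Pi.single i 1 - π)) :=
        sum_le_sum fun i _ => mul_le_mul_of_nonneg_left (hnd _) (hπ0 i)
    _ = ∑ i, π i * a i i - π ⬝ᵥ a *ᵥ π := sum_mul_single_sub_dotProduct_mulVec_single_sub a hπ1

end

/-- the non-degeneracy lower bound on the excess growth rate
of a long-only portfolio. -/
theorem diversity_excess_growth_lower_bound
    (n : ℕ) (hn : 2 ≤ n)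
    (a : Matrix (Fin n) (Fin n) ℝ)
    (ε : ℝ) (hε : 0 < ε)
    (hnd : ∀ ξ : Fin n → ℝ, ε * ∑ i, ξ i ^ 2 ≤ ξ ⬝ᵥ a.mulVec ξ)
    (π : Fin n → ℝ) (hπ0 : ∀ i, 0 ≤ π i) (hπ1 : ∑ i, π i = 1) :
    ε / 2 * (1 - Finset.univ.sup' ⟨⟨0, by omega⟩, Finset.mem_univ _⟩ π) ≤
      (1 / 2) * (∑ i, π i * a i i - ∑ i, ∑ j, π i * a i j * π j) := by
  have hsq := sum_sq_le_sup' hπ0 hπ1 ⟨⟨0, by omega⟩, Finset.mem_univ _⟩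
  have hbound := mul_one_sub_sum_sq_le a hnd hπ0 hπ1
  rw [← dotProduct_mulVec_eq_sum_sum]
  calc ε / 2 * (1 - Finset.univ.sup' ⟨⟨0, by omega⟩, Finset.mem_univ _⟩ π)
      ≤ ε / 2 * (1 - ∑ i, π i ^ 2) := by gcongr
    _ ≤ 1 / 2 * (∑ i, π i * a i i - π ⬝ᵥ a *ᵥ π) := by linarith
end

section
/- Let n ≥ 1 and let a be a symmetric positive semidefinite n×n real matrix. Then for every long-only portfolio vector π (i.e. π ∈ ℝⁿ with πᵢ ≥ 0 for all i and Σᵢ πᵢ = 1), the excess growth rate γ*_π(a) := (1/2)(Σᵢ πᵢ aᵢᵢ − Σᵢ Σⱼ πᵢ aᵢⱼ πⱼ) is nonnegative. -/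
/-!
When `∑ i, π i = 1`, the excess growth rate is half a `π`-weighted average of the quadratic form
of `a` at the deviations `eᵢ - π` of the unit vectors from the portfolio:
`∑ i, π i * (eᵢ - π)ᵀ a (eᵢ - π) = ∑ i, π i * a i i - πᵀ a π`.
For `a` positive semidefinite and `π ≥ 0` every term of the average is nonnegative.
-/

open Finset Matrix

namespace Matrix

variable {ι R : Type*} [Fintype ι]

theorem sum_sum_mul_mul_eq_dotProduct_mulVec [CommSemiring R] (a : Matrix ι ι R) (v : ι → R) :
    ∑ i, ∑ j, v i * a i j * v j = v ⬝ᵥ a *ᵥ v := by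
  simp only [dotProduct, mulVec, mul_sum, mul_assoc]

variable [DecidableEq ι]

section CommRing

variable [CommRing R]

theorem sub_single_dotProduct_mulVec_sub_single (a : Matrix ι ι R) (v : ι → R) (i : ι) :
    (Pi.single i 1 - v) ⬝ᵥ a *ᵥ (Pi.single i 1 - v) =
      a i i - (a *ᵥ v) i - (v ᵥ* a) i + v ⬝ᵥ a *ᵥ v := by
  rw [mulVec_sub, dotProduct_sub, sub_dotProduct, sub_dotProduct, single_one_dotProduct,
    single_one_dotProduct, mulVec_single_one, col_apply, ← vecMul_apply]
  ring

theorem sum_mul_sub_single_dotProduct_mulVec_sub_single (a : Matrix ι ι R) {π : ι → R}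
    (hπ : ∑ i, π i = 1) :
    ∑ i, π i * ((Pi.single i 1 - π) ⬝ᵥ a *ᵥ (Pi.single i 1 - π)) =
      ∑ i, π i * a i i - π ⬝ᵥ a *ᵥ π := by
  have hmulVec : ∑ i, π i * (a *ᵥ π) i = π ⬝ᵥ a *ᵥ π := rfl
  have hvecMul : ∑ i, π i * (π ᵥ* a) i = π ⬝ᵥ a *ᵥ π := by
    rw [dotProduct_mulVec, dotProduct_comm]; rfl
  simp only [sub_single_dotProduct_mulVec_sub_single, mul_add, mul_sub, sum_add_distrib,
    sum_sub_distrib, ← sum_mul, hπ, one_mul, hmulVec, hvecMul]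
  ring

end CommRing

theorem PosSemidef.dotProduct_mulVec_le_sum_mul_diag [CommRing R] [PartialOrder R]
    [IsOrderedRing R] [StarRing R] [TrivialStar R] {a : Matrix ι ι R} (ha : a.PosSemidef)
    {π : ι → R} (hπ0 : ∀ i, 0 ≤ π i) (hπ1 : ∑ i, π i = 1) :
    π ⬝ᵥ a *ᵥ π ≤ ∑ i, π i * a i i := by
  rw [← sub_nonneg, ← sum_mul_sub_single_dotProduct_mulVec_sub_single a hπ1]
  refine sum_nonneg fun i _ => mul_nonneg (hπ0 i) ?_
  simpa only [star_trivial] using ha.dotProduct_mulVec_nonneg (Pi.single i 1 - π)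

end Matrix

theorem excess_growth_nonneg_general
    (n : ℕ)
    (a : Matrix (Fin n) (Fin n) ℝ) (hpsd : a.PosSemidef)
    (π : Fin n → ℝ) (hπ0 : ∀ i, 0 ≤ π i) (hπ1 : ∑ i, π i = 1) :
    0 ≤ (1 / 2) * (∑ i, π i * a i i - ∑ i, ∑ j, π i * a i j * π j) := by
  rw [sum_sum_mul_mul_eq_dotProduct_mulVec]
  have hquad := hpsd.dotProduct_mulVec_le_sum_mul_diag hπ0 hπ1
  linarith

/-- nonnegativity of the excess growth rate for long-only portfolios. -/
theorem excess_growth_nonneg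
    (n : ℕ) (hn : 1 ≤ n)
    (a : Matrix (Fin n) (Fin n) ℝ) (hsym : a.IsSymm) (hpsd : a.PosSemidef)
    (π : Fin n → ℝ) (hπ0 : ∀ i, 0 ≤ π i) (hπ1 : ∑ i, π i = 1) :
    0 ≤ (1 / 2) * (∑ i, π i * a i i - ∑ i, ∑ j, π i * a i j * π j) :=
  excess_growth_nonneg_general n a hpsd π hπ0 hπ1
end

section
/- Let n ≥ 2, p < 0, and φ ∈ (0, 1/n). For all x and y in the open simplex Δⁿ₊ with xᵢ > φ and yᵢ > φ for all i = 1,…,n, the diversity function G_p(z) := (Σᵢ zᵢᵖ)^{1/p} satisfies log(G_p(x)/G_p(y)) > log(n φ). -/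
open Finset Real

/-!
Since `t ↦ t ^ (1 / p)` is decreasing for `p < 0`, the bound `φ < xᵢ` gives
`G_p(x) > n ^ (1 / p) φ`. On the simplex, summing the tangent-line bound
`t ^ p ≥ 1 + p (t - 1)` of the convex function `t ↦ t ^ p` at `t = n yᵢ` gives
`Σ yᵢ ^ p ≥ n ^ (1 - p)`, i.e. `G_p(y) ≤ n ^ (1 / p - 1)`.
Dividing, `G_p(x) / G_p(y) > n φ`.
-/

noncomputable def diversity {ι : Type*} [Fintype ι] (p : ℝ) (x : ι → ℝ) : ℝ :=
  (∑ i, x i ^ p) ^ (1 / p)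

theorem one_add_mul_sub_one_le_rpow_of_nonpos {p t : ℝ} (hp : p ≤ 0) (ht : 0 < t) :
    1 + p * (t - 1) ≤ t ^ p := by
  rw [rpow_def_of_pos ht, mul_comm (log t) p]
  have hlog : p * (t - 1) ≤ p * log t := mul_le_mul_of_nonpos_left (log_le_sub_one_of_pos ht) hp
  linarith [add_one_le_exp (p * log t)]

section Diversity

variable {ι : Type*} [Fintype ι] {p : ℝ}

theorem card_pos_of_sum_eq_one {y : ι → ℝ} (hsum : ∑ i, y i = 1) :
    (0 : ℝ) < Fintype.card ι := by
  obtain ⟨i, -, -⟩ := exists_ne_zero_of_sum_ne_zero (hsum ▸ one_ne_zero)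
  exact_mod_cast Fintype.card_pos_iff.mpr ⟨i⟩

theorem card_rpow_one_sub_le_sum_rpow (hp : p ≤ 0) {y : ι → ℝ} (hy : ∀ i, 0 < y i)
    (hsum : ∑ i, y i = 1) : (Fintype.card ι : ℝ) ^ (1 - p) ≤ ∑ i, y i ^ p := by
  set N : ℝ := (Fintype.card ι : ℝ)
  have hN : 0 < N := card_pos_of_sum_eq_one hsum
  have hlinear : ∑ i, (1 + p * (N * y i - 1)) = N := by
    simp only [sum_add_distrib, ← mul_sum, sum_sub_distrib, hsum, sum_const, card_univ,
      nsmul_eq_mul, mul_one, N]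
    ring
  have hbernoulli : N ≤ N ^ p * ∑ i, y i ^ p := by
    calc N = ∑ i, (1 + p * (N * y i - 1)) := hlinear.symm
      _ ≤ ∑ i, (N * y i) ^ p :=
        sum_le_sum fun i _ => one_add_mul_sub_one_le_rpow_of_nonpos hp (mul_pos hN (hy i))
      _ = N ^ p * ∑ i, y i ^ p := by
        rw [mul_sum]
        exact sum_congr rfl fun i _ => mul_rpow hN.le (hy i).le
  rwa [rpow_sub hN, rpow_one, div_le_iff₀ (rpow_pos_of_pos hN p), mul_comm]

theorem diversity_le_card_rpow (hp : p < 0) {y : ι → ℝ} (hy : ∀ i, 0 < y i)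
    (hsum : ∑ i, y i = 1) : diversity p y ≤ (Fintype.card ι : ℝ) ^ (1 / p - 1) := by
  have hN : (0 : ℝ) < Fintype.card ι := card_pos_of_sum_eq_one hsum
  calc diversity p y
      ≤ ((Fintype.card ι : ℝ) ^ (1 - p)) ^ (1 / p) :=
        rpow_le_rpow_of_nonpos (rpow_pos_of_pos hN _)
          (card_rpow_one_sub_le_sum_rpow hp.le hy hsum) (one_div_neg.mpr hp).le
    _ = (Fintype.card ι : ℝ) ^ (1 / p - 1) := by
        rw [← rpow_mul hN.le]
        congr 1
        field_simp [hp.ne]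

theorem card_rpow_mul_lt_diversity [Nonempty ι] (hp : p < 0) {φ : ℝ} (hφ : 0 < φ)
    {x : ι → ℝ} (hx : ∀ i, φ < x i) :
    (Fintype.card ι : ℝ) ^ (1 / p) * φ < diversity p x := by
  have hsum_lt : ∑ i, x i ^ p < Fintype.card ι * φ ^ p := by
    simpa only [sum_const, card_univ, nsmul_eq_mul] using
      sum_lt_sum_of_nonempty univ_nonempty fun i _ => rpow_lt_rpow_of_neg hφ (hx i) hp
  have hsum_pos : 0 < ∑ i, x i ^ p :=
    sum_pos (fun i _ => rpow_pos_of_pos (hφ.trans (hx i)) p) univ_nonempty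
  calc (Fintype.card ι : ℝ) ^ (1 / p) * φ = (Fintype.card ι * φ ^ p) ^ (1 / p) := by
        rw [mul_rpow (Nat.cast_nonneg _) (rpow_pos_of_pos hφ p).le, ← rpow_mul hφ.le,
          mul_one_div_cancel hp.ne, rpow_one]
    _ < diversity p x := rpow_lt_rpow_of_neg hsum_pos hsum_lt (one_div_neg.mpr hp)

end Diversity

theorem diversity_function_ratio_log_bound_general
    (n : ℕ) (hn : 2 ≤ n) (p : ℝ) (hp : p < 0)
    (φ : ℝ) (hφ : 0 < φ ∧ φ < 1 / n)
    (x y : Fin n → ℝ)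
    (hnfx : ∀ i, φ < x i)
    (hsumy : ∑ i, y i = 1) (hnfy : ∀ i, φ < y i) :
    Real.log ((∑ i, x i ^ p) ^ (1 / p) / (∑ i, y i ^ p) ^ (1 / p)) >
      Real.log (n * φ) := by
  have : Nonempty (Fin n) := ⟨⟨0, by omega⟩⟩
  have hN : (0 : ℝ) < n := by exact_mod_cast (by omega : 0 < n)
  have hy : ∀ i, 0 < y i := fun i => hφ.1.trans (hnfy i)
  have hGx := card_rpow_mul_lt_diversity hp hφ.1 hnfx
  have hGy := diversity_le_card_rpow hp hy hsumy
  rw [Fintype.card_fin] at hGx hGy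
  have hGy_pos : 0 < diversity p y :=
    rpow_pos_of_pos (sum_pos (fun i _ => rpow_pos_of_pos (hy i) p) univ_nonempty) _
  have hratio : n * φ < diversity p x / diversity p y :=
    calc (n : ℝ) * φ = (n : ℝ) ^ (1 / p) * φ / (n : ℝ) ^ (1 / p - 1) := by
          rw [rpow_sub hN, rpow_one]
          field_simp [(rpow_pos_of_pos hN (1 / p)).ne']
      _ < diversity p x / diversity p y :=
          div_lt_div₀ hGx hGy ((mul_pos (rpow_pos_of_pos hN _) hφ.1).trans hGx).le hGy_pos
  exact log_lt_log (mul_pos hN hφ.1) hratio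

/-- generating-function lower bound `log (G_p(x)/G_p(y)) > log (nφ)`
for the negative-parameter diversity function under the no-failure condition. -/
theorem diversity_function_ratio_log_bound
    (n : ℕ) (hn : 2 ≤ n) (p : ℝ) (hp : p < 0)
    (φ : ℝ) (hφ : 0 < φ ∧ φ < 1 / n)
    (x y : Fin n → ℝ)
    (hx : ∀ i, 0 < x i ∧ x i < 1) (hsumx : ∑ i, x i = 1) (hnfx : ∀ i, φ < x i)
    (hy : ∀ i, 0 < y i ∧ y i < 1) (hsumy : ∑ i, y i = 1) (hnfy : ∀ i, φ < y i) :
    Real.log ((∑ i, x i ^ p) ^ (1 / p) / (∑ i, y i ^ p) ^ (1 / p)) >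
      Real.log (n * φ) :=
  diversity_function_ratio_log_bound_general n hn p hp φ hφ x y hnfx hsumy hnfy
end

section
/- Let n ≥ 1 and p ∈ ℝ with p ≠ 0. For every x ∈ ℝⁿ with xᵢ > 0 for all i and Σᵢ xᵢ = 1, the diversity-weighted portfolio weights satisfy the functional-generation formula: for each i, xᵢᵖ / Σⱼ xⱼᵖ = (Dᵢ log G_p(x) + 1 − Σⱼ xⱼ Dⱼ log G_p(x)) · xᵢ, where G_p(x) := (Σᵢ xᵢᵖ)^{1/p} and Dᵢ denotes the partial derivative with respect to the i-th variable. -/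
/-!
Near a point of the open orthant, `log G_p = p⁻¹ log (∑ⱼ yⱼᵖ)`, so
`Dᵢ log G_p(x) = xᵢᵖ⁻¹ / ∑ⱼ xⱼᵖ`. By Euler's relation for the `1`-homogeneous `G_p`, the
correction term `∑ⱼ xⱼ Dⱼ log G_p(x)` equals `1`, and the generating formula reduces to
`xᵢ · xᵢᵖ⁻¹ / ∑ⱼ xⱼᵖ = πᵢ(x)`.
-/

open Finset Real

theorem Real.mul_rpow_sub_one {x : ℝ} (hx : x ≠ 0) (p : ℝ) : x * x ^ (p - 1) = x ^ p := by
  rw [rpow_sub_one hx, mul_div_cancel₀ _ hx]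

namespace DiversityWeighted

variable {ι : Type*} [Fintype ι] {p : ℝ} {x : ι → ℝ}

theorem sum_rpow_pos [Nonempty ι] (hx : ∀ j, 0 < x j) (p : ℝ) : 0 < ∑ j, x j ^ p :=
  sum_pos (fun j _ => rpow_pos_of_pos (hx j) p) univ_nonempty

theorem hasFDerivAt_sum_rpow (hx : ∀ j, x j ≠ 0) :
    HasFDerivAt (fun y : ι → ℝ => ∑ j, y j ^ p)
      (∑ j, (p * x j ^ (p - 1)) • ContinuousLinearMap.proj (R := ℝ) (φ := fun _ : ι => ℝ) j) x :=
  HasFDerivAt.fun_sum fun j _ => (hasFDerivAt_apply j x).rpow_const (Or.inl (hx j))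

theorem hasFDerivAt_log_diversity [Nonempty ι] (hp : p ≠ 0) (hx : ∀ j, 0 < x j) :
    HasFDerivAt (fun y : ι → ℝ => log ((∑ j, y j ^ p) ^ (1 / p)))
      (∑ j, (x j ^ (p - 1) / ∑ k, x k ^ p) •
        ContinuousLinearMap.proj (R := ℝ) (φ := fun _ : ι => ℝ) j) x := by
  have hS := hasFDerivAt_sum_rpow (p := p) fun j => (hx j).ne'
  have hlog : (fun y : ι → ℝ => log ((∑ j, y j ^ p) ^ (1 / p))) =ᶠ[nhds x]
      fun y => (1 / p) * log (∑ j, y j ^ p) := by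
    filter_upwards [hS.continuousAt.eventually (lt_mem_nhds (sum_rpow_pos hx p))] with y hy
    exact log_rpow hy _
  refine (((hS.log (sum_rpow_pos hx p).ne').const_mul (1 / p)).congr_of_eventuallyEq
    hlog).congr_fderiv ?_
  simp only [smul_sum, smul_smul]
  refine sum_congr rfl fun j _ => ?_
  field_simp

theorem fderiv_log_diversity_single [DecidableEq ι] (hp : p ≠ 0) (hx : ∀ j, 0 < x j) (i : ι) :
    fderiv ℝ (fun y : ι → ℝ => log ((∑ j, y j ^ p) ^ (1 / p))) x (Pi.single i 1) =
      x i ^ (p - 1) / ∑ k, x k ^ p := by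
  have : Nonempty ι := ⟨i⟩
  rw [(hasFDerivAt_log_diversity hp hx).fderiv]
  simp [Pi.single_apply]

theorem sum_mul_rpow_sub_one_div [Nonempty ι] (hx : ∀ j, 0 < x j) :
    ∑ j, x j * (x j ^ (p - 1) / ∑ k, x k ^ p) = 1 := by
  simp only [← mul_div_assoc, mul_rpow_sub_one (hx _).ne', ← sum_div,
    div_self (sum_rpow_pos hx p).ne']

end DiversityWeighted

open DiversityWeighted in
theorem diversity_functionally_generated_general
    (n : ℕ) (p : ℝ) (hp : p ≠ 0)
    (x : Fin n → ℝ) (hx : ∀ i, 0 < x i)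
    (Gp : (Fin n → ℝ) → ℝ) (hGp : Gp = fun y => (∑ j, y j ^ p) ^ (1 / p))
    (i : Fin n) :
    x i ^ p / ∑ j, x j ^ p =
      (fderiv ℝ (fun y => Real.log (Gp y)) x (Pi.single i 1) + 1 -
        ∑ j, x j * fderiv ℝ (fun y => Real.log (Gp y)) x (Pi.single j 1)) * x i := by
  have : Nonempty (Fin n) := ⟨i⟩
  subst hGp
  simp only [fderiv_log_diversity_single hp hx, sum_mul_rpow_sub_one_div hx, add_sub_cancel_right]
  rw [div_mul_eq_mul_div, mul_comm, mul_rpow_sub_one (hx i).ne']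

/-- the diversity function `G_p` generates the diversity-weighted
portfolio with parameter `p ≠ 0` via Fernholz's functional-generation formula. -/
theorem diversity_functionally_generated
    (n : ℕ) (hn : 1 ≤ n) (p : ℝ) (hp : p ≠ 0)
    (x : Fin n → ℝ) (hx : ∀ i, 0 < x i) (hsum : ∑ i, x i = 1)
    (Gp : (Fin n → ℝ) → ℝ) (hGp : Gp = fun y => (∑ j, y j ^ p) ^ (1 / p))
    (i : Fin n) :
    x i ^ p / ∑ j, x j ^ p =
      (fderiv ℝ (fun y => Real.log (Gp y)) x (Pi.single i 1) + 1 -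
        ∑ j, x j * fderiv ℝ (fun y => Real.log (Gp y)) x (Pi.single j 1)) * x i :=
  diversity_functionally_generated_general n p hp x hx Gp hGp i
end

section
/- Let n ≥ 2, δ ∈ (0,1), and let x ∈ ℝⁿ satisfy xᵢ ≥ 0 for all i and Σᵢ xᵢ = 1. Let x₍₁₎ ≥ x₍₂₎ ≥ … ≥ x₍ₙ₎ denote the entries of x in decreasing order. If x₍₁₎ < 1 − δ and k is an integer with 2 ≤ k ≤ n and (k−1)(1−δ) < 1, then x₍ₖ₎ > (1 − (k−1)(1−δ)) / (n − (k−1)). -/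
open Finset

/-- diversity `x₍₁₎ < 1 - δ` implies the lower bound
`x₍ₖ₎ > (1 - (k-1)(1-δ))/(n - (k-1))` on the k-th largest market weight,
provided `(k-1)(1-δ) < 1`. -/
theorem diversity_implies_limited_failure_bound
    (n : ℕ) (hn : 2 ≤ n) (δ : ℝ) (hδ : 0 < δ ∧ δ < 1)
    (x : Fin n → ℝ) (hx0 : ∀ i, 0 ≤ x i) (hsum : ∑ i, x i = 1)
    (σ : Equiv.Perm (Fin n))
    (hσ : ∀ i j : Fin n, i ≤ j → x (σ j) ≤ x (σ i))
    (k : ℕ) (hk : 2 ≤ k ∧ k ≤ n) (hkδ : ((k : ℝ) - 1) * (1 - δ) < 1)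
    (hdiv : x (σ ⟨0, by omega⟩) < 1 - δ) :
    x (σ ⟨k - 1, by omega⟩) >
      (1 - ((k : ℝ) - 1) * (1 - δ)) / ((n : ℝ) - ((k : ℝ) - 1)) := by
  obtain ⟨hk2, hkn⟩ := hk
  set m : Fin n := ⟨k - 1, by omega⟩ with hm
  have hsumσ : ∑ i, x (σ i) = 1 := by
    rw [Equiv.sum_comp σ x]; exact hsum
  have hsplit : ∑ i ∈ Iio m, x (σ i) + ∑ i ∈ Ici m, x (σ i) = 1 := by
    rw [← hsumσ, ← Finset.sum_union]
    · congr 1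
      ext i
      simp [Fin.lt_def, Fin.le_def, hm]
      omega
    · rw [Finset.disjoint_left]
      intro a ha hb
      simp [Fin.lt_def, Fin.le_def, hm] at ha hb
      omega
  have hcardA : (Iio m).card = k - 1 := by rw [Fin.card_Iio]
  have hcardB : (Ici m).card = n - (k - 1) := by rw [Fin.card_Ici]
  -- each of the top k-1 entries is < 1 - δ
  have hAlt : ∑ i ∈ Iio m, x (σ i) < ((k : ℝ) - 1) * (1 - δ) := by
    have h1 : ∑ i ∈ Iio m, x (σ i) < ∑ _i ∈ Iio m, (1 - δ) := by
      apply Finset.sum_lt_sum_of_nonempty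
      · refine ⟨⟨0, by omega⟩, ?_⟩
        simp [Fin.lt_def, hm]; omega
      · intro i _
        calc x (σ i) ≤ x (σ ⟨0, by omega⟩) := hσ _ _ (by simp [Fin.le_def])
          _ < 1 - δ := hdiv
    rw [Finset.sum_const, hcardA, nsmul_eq_mul] at h1
    have : ((k - 1 : ℕ) : ℝ) = (k : ℝ) - 1 := by
      push_cast [Nat.cast_sub (by omega : 1 ≤ k)]; ring
    rwa [this] at h1
  -- each of the remaining entries is ≤ x (σ m)
  have hBle : ∑ i ∈ Ici m, x (σ i) ≤ ((n : ℝ) - ((k : ℝ) - 1)) * x (σ m) := by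
    have h1 : ∑ i ∈ Ici m, x (σ i) ≤ ∑ _i ∈ Ici m, x (σ m) := by
      apply Finset.sum_le_sum
      intro i hi
      exact hσ m i (by simpa using hi)
    rw [Finset.sum_const, hcardB, nsmul_eq_mul] at h1
    have : ((n - (k - 1) : ℕ) : ℝ) = (n : ℝ) - ((k : ℝ) - 1) := by
      push_cast [Nat.cast_sub (by omega : k - 1 ≤ n), Nat.cast_sub (by omega : 1 ≤ k)]
      ring
    rwa [this] at h1
  have hden : (0 : ℝ) < (n : ℝ) - ((k : ℝ) - 1) := by
    have : (k : ℝ) ≤ (n : ℝ) := by exact_mod_cast hkn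
    have : (2 : ℝ) ≤ (k : ℝ) := by exact_mod_cast hk2
    linarith [show (k : ℝ) ≤ (n : ℝ) from by exact_mod_cast hkn]
  rw [gt_iff_lt, div_lt_iff₀ hden]
  nlinarith [hsplit, hAlt, hBle]
end

section
/- Let n and 𝔪 be integers with 2 < 𝔪 < n, set m := 𝔪 − 2, let κ ∈ (0, 1/𝔪), and let r > 0. Define 𝒢ᵣ(z) := (Σ_{ℓ=m+1}^{n} (z₍ℓ₎)ʳ)^{1/r} for z ∈ ℝⁿ with nonnegative entries summing to 1, where z₍ₖ₎ is the k-th largest entry. Then for all such x and y with x₍𝔪₎ > κ and y₍𝔪₎ > κ, one has log(𝒢ᵣ(x)/𝒢ᵣ(y)) > log((m+1)κ) − (1/r) log((n−m)/2). -/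
open Finset Real

/-- generating-function lower bound for the small-stock
diversity-weighted portfolio under the limited-failure condition. -/
theorem small_stock_generating_function_ratio_bound
    (n 𝔪 : ℕ) (h𝔪 : 2 < 𝔪 ∧ 𝔪 < n)
    (m : ℕ) (hm : m = 𝔪 - 2)
    (κ : ℝ) (hκ : 0 < κ ∧ κ < 1 / (𝔪 : ℝ))
    (r : ℝ) (hr : 0 < r)
    (x y : Fin n → ℝ)
    (hx0 : ∀ i, 0 ≤ x i) (hsumx : ∑ i, x i = 1)
    (hy0 : ∀ i, 0 ≤ y i) (hsumy : ∑ i, y i = 1)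
    (σ ρ : Equiv.Perm (Fin n))
    (hσ : ∀ i j : Fin n, i ≤ j → x (σ j) ≤ x (σ i))
    (hρ : ∀ i j : Fin n, i ≤ j → y (ρ j) ≤ y (ρ i))
    (hlfx : x (σ ⟨𝔪 - 1, by omega⟩) > κ)
    (hlfy : y (ρ ⟨𝔪 - 1, by omega⟩) > κ) :
    Real.log
        ((∑ ℓ ∈ Finset.univ.filter (fun ℓ : Fin n => m ≤ (ℓ : ℕ)), x (σ ℓ) ^ r) ^ (1 / r) /
          (∑ ℓ ∈ Finset.univ.filter (fun ℓ : Fin n => m ≤ (ℓ : ℕ)), y (ρ ℓ) ^ r) ^ (1 / r)) >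
      Real.log (((m : ℝ) + 1) * κ) - (1 / r) * Real.log (((n : ℝ) - m) / 2) := by
  obtain ⟨h2, hn⟩ := h𝔪
  obtain ⟨hκ0, hκ1⟩ := hκ
  have hmn : m < n := by omega
  have hm1n : 𝔪 - 1 < n := by omega
  have hrne : r ≠ 0 := ne_of_gt hr
  set im : Fin n := ⟨m, hmn⟩ with him
  set i1 : Fin n := ⟨𝔪 - 1, hm1n⟩ with hi1
  have hmle : im ≤ i1 := by simp [Fin.le_def, him, hi1]; omega
  set s : Finset (Fin n) := Finset.univ.filter (fun ℓ : Fin n => m ≤ (ℓ : ℕ)) with hs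
  have hseq : s = Finset.Ici im := by
    ext ℓ; simp [hs, Fin.le_def, him]
  have hcard : s.card = n - m := by rw [hseq, Fin.card_Ici]
  set A := ∑ ℓ ∈ s, x (σ ℓ) ^ r with hA
  set B := ∑ ℓ ∈ s, y (ρ ℓ) ^ r with hB
  have hxm : κ < x (σ im) := lt_of_lt_of_le hlfx (hσ im i1 hmle)
  have hym : κ < y (ρ im) := lt_of_lt_of_le hlfy (hρ im i1 hmle)
  -- lower bound on A
  have hne : im ≠ i1 := by simp [Fin.ext_iff, him, hi1]; omega
  have hpairsub : ({im, i1} : Finset (Fin n)) ⊆ s := by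
    intro ℓ hℓ
    simp only [Finset.mem_insert, Finset.mem_singleton] at hℓ
    rw [hseq, Finset.mem_Ici]
    rcases hℓ with h | h <;> subst h
    · exact le_rfl
    · exact hmle
  have hAge : x (σ im) ^ r + x (σ i1) ^ r ≤ A := by
    calc x (σ im) ^ r + x (σ i1) ^ r
        = ∑ ℓ ∈ ({im, i1} : Finset (Fin n)), x (σ ℓ) ^ r := by rw [Finset.sum_pair hne]
      _ ≤ A := Finset.sum_le_sum_of_subset_of_nonneg hpairsub
          (fun i _ _ => Real.rpow_nonneg (hx0 _) r)
  have hA2 : 2 * κ ^ r < A := by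
    have h1 : κ ^ r < x (σ im) ^ r := Real.rpow_lt_rpow hκ0.le hxm hr
    have h2 : κ ^ r < x (σ i1) ^ r := Real.rpow_lt_rpow hκ0.le hlfx hr
    nlinarith
  -- upper bound on y (ρ im)
  have hyb : y (ρ im) ≤ 1 / ((m : ℝ) + 1) := by
    have hcardI : (Finset.Iic im).card = m + 1 := by rw [Fin.card_Iic]
    have h1 : (Finset.Iic im).card • y (ρ im) ≤ ∑ ℓ ∈ Finset.Iic im, y (ρ ℓ) :=
      Finset.card_nsmul_le_sum _ _ _ (fun ℓ hℓ => hρ ℓ im (Finset.mem_Iic.mp hℓ))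
    have h2 : ∑ ℓ ∈ Finset.Iic im, y (ρ ℓ) ≤ 1 := by
      calc ∑ ℓ ∈ Finset.Iic im, y (ρ ℓ) ≤ ∑ ℓ, y (ρ ℓ) :=
            Finset.sum_le_sum_of_subset_of_nonneg (Finset.subset_univ _)
              (fun i _ _ => hy0 _)
        _ = 1 := by rw [Equiv.sum_comp ρ y, hsumy]
    rw [hcardI] at h1
    have hpos : (0:ℝ) < (m : ℝ) + 1 := by positivity
    rw [le_div_iff₀ hpos]
    push_cast [nsmul_eq_mul] at h1
    nlinarith
  -- upper bound on B
  have hmnR : (3:ℝ) ≤ (n : ℝ) - m := by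
    have : m + 3 ≤ n := by omega
    have := Nat.cast_le (α := ℝ) |>.mpr this
    push_cast at this ⊢
    linarith
  have hBle : B ≤ ((n : ℝ) - m) * (1 / ((m : ℝ) + 1)) ^ r := by
    have hterm : ∀ ℓ ∈ s, y (ρ ℓ) ^ r ≤ (1 / ((m : ℝ) + 1)) ^ r := by
      intro ℓ hℓ
      have hle : im ≤ ℓ := by rw [hseq] at hℓ; exact Finset.mem_Ici.mp hℓ
      exact Real.rpow_le_rpow (hy0 _) ((hρ im ℓ hle).trans hyb) hr.le
    calc B ≤ s.card • (1 / ((m : ℝ) + 1)) ^ r := Finset.sum_le_card_nsmul _ _ _ hterm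
      _ = ((n : ℝ) - m) * (1 / ((m : ℝ) + 1)) ^ r := by
          rw [hcard, nsmul_eq_mul, Nat.cast_sub hmn.le]
  have hB0 : 0 < B := by
    refine Finset.sum_pos' (fun i _ => Real.rpow_nonneg (hy0 _) r) ⟨im, ?_, ?_⟩
    · rw [hseq]; exact Finset.mem_Ici.mpr le_rfl
    · exact Real.rpow_pos_of_pos (hκ0.trans hym) r
  have hA0 : 0 < A := lt_trans (by positivity) hA2
  have hrinv : 0 < 1 / r := by positivity
  -- log computations
  have hlogdiv : Real.log (A ^ (1/r) / B ^ (1/r))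
      = (1/r) * Real.log A - (1/r) * Real.log B := by
    rw [Real.log_div (ne_of_gt (Real.rpow_pos_of_pos hA0 _))
        (ne_of_gt (Real.rpow_pos_of_pos hB0 _)), Real.log_rpow hA0, Real.log_rpow hB0]
  have hlogA : Real.log 2 + r * Real.log κ < Real.log A := by
    have h := Real.log_lt_log (by positivity) hA2
    rwa [Real.log_mul two_ne_zero (ne_of_gt (Real.rpow_pos_of_pos hκ0 r)),
      Real.log_rpow hκ0] at h
  have hm1pos : (0:ℝ) < (m : ℝ) + 1 := by positivity
  have hlogB : Real.log B ≤ Real.log ((n : ℝ) - m) - r * Real.log ((m : ℝ) + 1) := by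
    have h := Real.log_le_log hB0 hBle
    rwa [Real.log_mul (by linarith) (ne_of_gt (Real.rpow_pos_of_pos (by positivity) r)),
      Real.log_rpow (by positivity), one_div ((m:ℝ)+1), Real.log_inv, mul_neg,
      ← sub_eq_add_neg] at h
  have hRHS1 : Real.log (((m : ℝ) + 1) * κ) = Real.log ((m : ℝ) + 1) + Real.log κ :=
    Real.log_mul (ne_of_gt hm1pos) (ne_of_gt hκ0)
  have hRHS2 : Real.log (((n : ℝ) - m) / 2) = Real.log ((n : ℝ) - m) - Real.log 2 :=
    Real.log_div (by linarith) two_ne_zero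
  have h1 : (1/r) * Real.log A > (1/r) * Real.log 2 + Real.log κ := by
    have := mul_lt_mul_of_pos_left hlogA hrinv
    rw [mul_add, ← mul_assoc, one_div_mul_cancel hrne, one_mul] at this
    exact this
  have h2 : (1/r) * Real.log B ≤ (1/r) * Real.log ((n : ℝ) - m) - Real.log ((m : ℝ) + 1) := by
    have := mul_le_mul_of_nonneg_left hlogB hrinv.le
    rw [mul_sub, ← mul_assoc, one_div_mul_cancel hrne, one_mul] at this
    exact this
  rw [hlogdiv, hRHS1, hRHS2, mul_sub]
  linarith
end

section
/- Let n ≥ 2, let m be an integer with 0 ≤ m < n, let φ ∈ (0, 1/n), and let r ∈ (log(n−m) / log((m+1)φ), 0). Let x ∈ ℝⁿ satisfy Σᵢ xᵢ = 1 and xᵢ > φ for all i, and let x₍ₖ₎ denote the k-th largest entry of x. Then the largest small-stock portfolio weight satisfies (x₍ₙ₎)ʳ / Σ_{ℓ=m+1}^{n} (x₍ℓ₎)ʳ < φʳ / ((n−m)(m+1)^{−r}) < 1. -/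
open Finset Real

/-- largest-weight bound for the negative-parameter small-stock
diversity-weighted portfolio under the no-failure condition. -/
theorem small_stock_largest_weight_bound_NF
    (n : ℕ) (hn : 2 ≤ n)
    (m : ℕ) (hm : m < n)
    (φ : ℝ) (hφ : 0 < φ ∧ φ < 1 / n)
    (r : ℝ) (hr : Real.log ((n : ℝ) - m) / Real.log (((m : ℝ) + 1) * φ) < r ∧ r < 0)
    (x : Fin n → ℝ) (hsum : ∑ i, x i = 1) (hnf : ∀ i, φ < x i)
    (σ : Equiv.Perm (Fin n))
    (hσ : ∀ i j : Fin n, i ≤ j → x (σ j) ≤ x (σ i)) :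
    x (σ ⟨n - 1, by omega⟩) ^ r /
        ∑ ℓ ∈ Finset.univ.filter (fun ℓ : Fin n => m ≤ (ℓ : ℕ)), x (σ ℓ) ^ r <
      φ ^ r / (((n : ℝ) - m) * ((m : ℝ) + 1) ^ (-r)) ∧
    φ ^ r / (((n : ℝ) - m) * ((m : ℝ) + 1) ^ (-r)) < 1 := by
  obtain ⟨hφ0, hφn⟩ := hφ
  obtain ⟨hr1, hr0⟩ := hr
  have hx : ∀ i, 0 < x i := fun i => hφ0.trans (hnf i)
  have hm1 : (0:ℝ) < (m:ℝ) + 1 := by positivity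
  have hnm : (0:ℝ) < (n:ℝ) - m := by
    have : (m:ℝ) < n := by exact_mod_cast hm
    linarith
  -- the filter set
  set S := Finset.univ.filter (fun ℓ : Fin n => m ≤ (ℓ : ℕ)) with hS
  have hScard : S.card = n - m := by
    have : S = Finset.Ici (⟨m, hm⟩ : Fin n) := by
      ext ℓ; simp [hS, Fin.le_def]
    rw [this, Fin.card_Ici]
  -- each term in S: x (σ ℓ) ≤ 1/(m+1)
  have hbound : ∀ ℓ ∈ S, ((m:ℝ)+1) ^ (-r) ≤ x (σ ℓ) ^ r := by
    intro ℓ hℓ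
    have hℓm : m ≤ (ℓ : ℕ) := by simpa [hS] using hℓ
    have hxle : x (σ ℓ) ≤ 1 / ((m:ℝ)+1) := by
      have key : ((m:ℝ)+1) * x (σ ℓ) ≤ 1 := by
        have hsub : ∑ i ∈ Finset.univ.filter (fun i : Fin n => (i:ℕ) ≤ m), x (σ i)
            ≤ ∑ i : Fin n, x (σ i) := by
          apply Finset.sum_le_sum_of_subset_of_nonneg (Finset.filter_subset _ _)
          intro i _ _; exact (hx _).le
        have hperm : ∑ i : Fin n, x (σ i) = 1 := by
          rw [Equiv.sum_comp σ x]; exact hsum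
        have hcard : (Finset.univ.filter (fun i : Fin n => (i:ℕ) ≤ m)).card = m + 1 := by
          have : Finset.univ.filter (fun i : Fin n => (i:ℕ) ≤ m)
              = Finset.Iic (⟨m, hm⟩ : Fin n) := by
            ext i; simp [Fin.le_def]
          rw [this, Fin.card_Iic]
        have hlow : ∀ i ∈ Finset.univ.filter (fun i : Fin n => (i:ℕ) ≤ m),
            x (σ ℓ) ≤ x (σ i) := by
          intro i hi
          have : (i:ℕ) ≤ m := by simpa using hi
          exact hσ i ℓ (Fin.le_def.mpr (by omega))
        have := Finset.card_nsmul_le_sum _ _ _ hlow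
        rw [hcard] at this
        simp only [nsmul_eq_mul] at this
        calc ((m:ℝ)+1) * x (σ ℓ) = ((m+1 : ℕ):ℝ) * x (σ ℓ) := by push_cast; ring
          _ ≤ ∑ i ∈ Finset.univ.filter (fun i : Fin n => (i:ℕ) ≤ m), x (σ i) := this
          _ ≤ 1 := by linarith [hsub, hperm]
      rw [le_div_iff₀ hm1]; linarith [key]
    calc ((m:ℝ)+1) ^ (-r) = (1 / ((m:ℝ)+1)) ^ r := by
          rw [one_div, Real.inv_rpow hm1.le, ← Real.rpow_neg hm1.le]
      _ ≤ x (σ ℓ) ^ r := Real.rpow_le_rpow_of_nonpos (hx _) hxle hr0.le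
  have hden : ((n:ℝ) - m) * ((m:ℝ)+1) ^ (-r) ≤ ∑ ℓ ∈ S, x (σ ℓ) ^ r := by
    have := Finset.card_nsmul_le_sum S _ _ hbound
    rw [hScard] at this
    simpa [nsmul_eq_mul, Nat.cast_sub hm.le] using this
  have hDpos : (0:ℝ) < ((n:ℝ) - m) * ((m:ℝ)+1) ^ (-r) := by positivity
  have hdenpos : (0:ℝ) < ∑ ℓ ∈ S, x (σ ℓ) ^ r := lt_of_lt_of_le hDpos hden
  have hnum : x (σ ⟨n - 1, by omega⟩) ^ r < φ ^ r :=
    Real.rpow_lt_rpow_of_neg hφ0 (hnf _) hr0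
  constructor
  · calc x (σ ⟨n - 1, by omega⟩) ^ r / ∑ ℓ ∈ S, x (σ ℓ) ^ r
        ≤ x (σ ⟨n - 1, by omega⟩) ^ r / (((n:ℝ) - m) * ((m:ℝ)+1) ^ (-r)) := by
          apply div_le_div_of_nonneg_left (Real.rpow_nonneg (hx _).le r) hDpos hden
      _ < φ ^ r / (((n:ℝ) - m) * ((m:ℝ)+1) ^ (-r)) := by gcongr
  · rw [div_lt_one hDpos]
    have hLneg : Real.log (((m:ℝ) + 1) * φ) < 0 := by
      apply Real.log_neg (by positivity)
      have h1 : ((m:ℝ)+1) * φ < ((m:ℝ)+1) * (1 / n) := by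
        apply mul_lt_mul_of_pos_left hφn hm1
      have h2 : ((m:ℝ)+1) ≤ (n:ℝ) := by exact_mod_cast hm
      have hn0 : (0:ℝ) < n := by positivity
      calc ((m:ℝ)+1) * φ < ((m:ℝ)+1) * (1 / n) := h1
        _ ≤ (n:ℝ) * (1 / n) := by
            apply mul_le_mul_of_nonneg_right h2 (by positivity)
        _ = 1 := by field_simp
    have hkey : r * Real.log (((m:ℝ) + 1) * φ) < Real.log ((n:ℝ) - m) := by
      rw [div_lt_iff_of_neg hLneg] at hr1
      linarith [hr1]
    have hpow : (((m:ℝ) + 1) * φ) ^ r < (n:ℝ) - m := by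
      rw [← Real.exp_log hnm, Real.rpow_def_of_pos (by positivity)]
      exact Real.exp_lt_exp.mpr (by linarith [hkey])
    rw [Real.mul_rpow hm1.le hφ0.le, mul_comm (((m:ℝ)+1) ^ r)] at hpow
    rw [Real.rpow_neg hm1.le]
    calc φ ^ r = φ ^ r * (((m:ℝ)+1) ^ r * (((m:ℝ)+1) ^ r)⁻¹) := by
          rw [mul_inv_cancel₀ (by positivity : ((m:ℝ)+1) ^ r ≠ 0), mul_one]
      _ = (φ ^ r * ((m:ℝ)+1) ^ r) * (((m:ℝ)+1) ^ r)⁻¹ := by ring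
      _ < ((n:ℝ) - m) * (((m:ℝ)+1) ^ r)⁻¹ := by
          apply mul_lt_mul_of_pos_right hpow (by positivity)
end
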